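/- Let r ≥ 3 be an integer and let α ∈ ℂ satisfy rα² + 2(r−1)α + (r−1) = 0 (any such α is non-real, and then (r−1) + αr ≠ 0). In ℂ[p₁,…,p_r] define s_i = z_i for i ≠ r and s_r = ((r−1)/((r−1)+αr))·(z_r + α·z₁·z_{r−1}). Then for all 1 ≤ i,j ≤ r there exist polynomials P_{ij} and Q_{ij} in r−1 variables such that Σ_{k=1}^r (∂s_i/∂p_k)(∂s_j/∂p_k) = P_{ij}(s₁,…,s_{r−2},s_r) + s_{r−1}·Q_{ij}(s₁,…,s_{r−2},s_r) in ℂ[p₁,…,p_r]. (That is, in the coordinates s the intersection form on the orbit space of the standard representation of the permutation group S_r is at most linear in s_{r−1}.) -/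

import Mathlib

open MvPolynomial

/-- Normalized power sums `z_i = (1/i) Σ_{k=1}^r p_k^i` in `ℂ[p₁,…,p_r]`. -/
noncomputable def zPol (r : ℕ) (i : ℕ) : MvPolynomial (Fin r) ℂ :=
  C ((1 : ℂ) / (i : ℂ)) * ∑ k : Fin r, (X k) ^ i

/-- The coordinates `s_i`: `s_i = z_i` for `i ≠ r` and
`s_r = ((r−1)/((r−1)+αr))(z_r + α z₁ z_{r−1})`. -/
noncomputable def sPol (r : ℕ) (α : ℂ) (i : ℕ) : MvPolynomial (Fin r) ℂ :=
  if i = r then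
    C (((r : ℂ) - 1) / (((r : ℂ) - 1) + α * r)) *
      (zPol r r + C α * zPol r 1 * zPol r (r - 1))
  else zPol r i

/-- The substitution variables `(s₁, …, s_{r−2}, s_r)` (omitting `s_{r−1}`). -/
noncomputable def sVars (r : ℕ) (α : ℂ) : Fin (r - 1) → MvPolynomial (Fin r) ℂ :=
  fun m => if (m : ℕ) < r - 2 then sPol r α ((m : ℕ) + 1) else sPol r α r

/-!
Write `P_m = Σ_k p_k^m` and `e_k` for the power sums and elementary symmetric polynomials. By
Newton's identities, `e_k` for `k ≤ r - 2` is a polynomial in `P_1, …, P_{r-2}`, while `e_{r-1}`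
and `e_r` are linear in `1, P_{r-1}, P_r` over `ℂ[P_1, …, P_{r-2}]`; feeding this back into Newton's
identities, so is every `P_m` with `m ≤ 2r - 3`, and so is `(r - 1) P_{2r-2} - P_{r-1}²`.
As `P_{r-1} = (r - 1) s_{r-1}` and `P_r` is linear in `s_{r-1}` over `ℂ[s_1, …, s_{r-2}, s_r]`, all
of these are at most linear in `s_{r-1}`. By the Leibniz rule the entries of the intersection form
are combinations of such `P_m` with coefficients in `z_1, z_{r-1}`, except that the `(r, r)` entry
also involves `P_{2r-2}`; there the total coefficient of `s_{r-1}²` is a multiple of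
`rα² + 2(r - 1)α + (r - 1) = 0`.
-/

open Finset

section SubalgebraModule

variable {R A : Type*} [CommSemiring R] [CommSemiring A] [Algebra R A] {S : Subalgebra R A}
  {N : Submodule S A}

theorem Submodule.mul_mem_of_mem_subalgebra {x y : A} (hx : x ∈ S) (hy : y ∈ N) : x * y ∈ N :=
  N.smul_mem ⟨x, hx⟩ hy

theorem Submodule.mul_mem_of_mem_subalgebra' {x y : A} (hx : x ∈ N) (hy : y ∈ S) : x * y ∈ N :=
  mul_comm y x ▸ N.mul_mem_of_mem_subalgebra hy hx

theorem Submodule.mem_of_mem_subalgebra (h1 : (1 : A) ∈ N) {x : A} (hx : x ∈ S) : x ∈ N := by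
  simpa using N.mul_mem_of_mem_subalgebra hx h1

theorem Submodule.natCast_mul_mem_iff {K A : Type*} [Field K] [CharZero K] [Ring A]
    [Algebra K A] (V : Submodule K A) {k : ℕ} (hk : k ≠ 0) {x : A} :
    (k : A) * x ∈ V ↔ x ∈ V := by
  rw [← nsmul_eq_mul, ← Nat.cast_smul_eq_nsmul K, V.smul_mem_iff (Nat.cast_ne_zero.2 hk)]

end SubalgebraModule

namespace MvPolynomial

section Newton

variable {σ R : Type*} [Fintype σ]

theorem esymm_eq_zero_of_card_lt [CommSemiring R] {k : ℕ}
    (hk : Fintype.card σ < k) : esymm σ R k = 0 := by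
  rw [esymm, powersetCard_eq_empty.2 (by simpa using hk), sum_empty]

theorem psum_eq_neg_sum_of_card_lt [CommRing R] {m : ℕ}
    (hm : Fintype.card σ < m) :
    psum σ R m = -∑ a ∈ antidiagonal m with a.1 ∈ Set.Ioo 0 m,
      (-1) ^ a.1 * esymm σ R a.1 * psum σ R a.2 := by
  rw [psum_eq_mul_esymm_sub_sum σ R m (by omega), esymm_eq_zero_of_card_lt hm, mul_zero,
    zero_sub]

variable {K : Type*} [Field K] [CharZero K]

theorem esymm_mem_of_forall_psum_mem (S : Subalgebra K (MvPolynomial σ K))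
    {m : ℕ} (hS : ∀ i, 1 ≤ i → i ≤ m → psum σ K i ∈ S) {k : ℕ} (hk : k ≤ m) :
    esymm σ K k ∈ S := by
  induction k using Nat.strong_induction_on with
  | _ k ih =>
  rcases Nat.eq_zero_or_pos k with rfl | hk0
  · rw [esymm_zero]; exact S.one_mem
  rw [← Subalgebra.mem_toSubmodule, ← Submodule.natCast_mul_mem_iff _ hk0.ne',
    Subalgebra.mem_toSubmodule, mul_esymm_eq_sum]
  refine S.mul_mem (S.pow_mem (S.neg_mem S.one_mem) _) (S.sum_mem fun a ha => ?_)
  obtain ⟨hsum, hlt⟩ : a.1 + a.2 = k ∧ a.1 < k := by simpa using ha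
  exact S.mul_mem (S.mul_mem (S.pow_mem (S.neg_mem S.one_mem) _) (ih _ hlt (by omega)))
    (hS _ (by omega) (by omega))

end Newton

theorem neg_one_pow_mul_esymm_mul_psum_mem {σ R : Type*} [Fintype σ] [CommRing R]
    {S : Subalgebra R (MvPolynomial σ R)} {N : Submodule S (MvPolynomial σ R)} {a b : ℕ}
    (h : esymm σ R a ∈ S ∧ psum σ R b ∈ N ∨ esymm σ R a ∈ N ∧ psum σ R b ∈ S) :
    (-1) ^ a * esymm σ R a * psum σ R b ∈ N := by
  have hsign : ((-1) ^ a : MvPolynomial σ R) ∈ S := S.pow_mem (S.neg_mem S.one_mem) a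
  rcases h with ⟨he, hp⟩ | ⟨he, hp⟩
  · exact N.mul_mem_of_mem_subalgebra (S.mul_mem hsign he) hp
  · exact N.mul_mem_of_mem_subalgebra' (N.mul_mem_of_mem_subalgebra hsign he) hp

section LinearInTopPowerSums

variable {K : Type*} [Field K] [CharZero K] {n : ℕ}
  {S : Subalgebra K (MvPolynomial (Fin n) K)} {N : Submodule S (MvPolynomial (Fin n) K)}

theorem exists_mem_neg_one_pow_mul_esymm_eq
    (hS : ∀ i, 1 ≤ i → i ≤ n - 2 → psum (Fin n) K i ∈ S) (hn : 2 ≤ n) :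
    ∃ w ∈ S, (-1) ^ n * ((n - 1 : ℕ) : MvPolynomial (Fin n) K) * esymm (Fin n) K (n - 1) =
      psum (Fin n) K (n - 1) + w := by
  refine ⟨∑ a ∈ antidiagonal (n - 1) with a.1 ∈ Set.Ioo 0 (n - 1),
    (-1) ^ a.1 * esymm (Fin n) K a.1 * psum (Fin n) K a.2, S.sum_mem fun a ha => ?_, ?_⟩
  · obtain ⟨hsum, ha0, ha1⟩ : a.1 + a.2 = n - 1 ∧ 0 < a.1 ∧ a.1 < n - 1 := by simpa using ha
    exact S.mul_mem (S.mul_mem (S.pow_mem (S.neg_mem S.one_mem) _)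
      (esymm_mem_of_forall_psum_mem S hS (by omega))) (hS _ (by omega) (by omega))
  · rw [psum_eq_mul_esymm_sub_sum _ _ _ (by omega), Nat.sub_add_cancel (by omega : 1 ≤ n)]
    ring

theorem esymm_sub_one_mem (hS : ∀ i, 1 ≤ i → i ≤ n - 2 → psum (Fin n) K i ∈ S)
    (h1 : 1 ∈ N) (hpn1 : psum (Fin n) K (n - 1) ∈ N) (hn : 2 ≤ n) :
    esymm (Fin n) K (n - 1) ∈ N := by
  obtain ⟨w, hw, hnewton⟩ := exists_mem_neg_one_pow_mul_esymm_eq hS hn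
  have key : ((n - 1 : ℕ) : MvPolynomial (Fin n) K) * esymm (Fin n) K (n - 1) =
      (-1) ^ n * (psum (Fin n) K (n - 1) + w) := by
    rw [← hnewton, ← mul_assoc, ← mul_assoc, ← pow_add, Even.neg_one_pow ⟨n, rfl⟩, one_mul]
  rw [← Submodule.restrictScalars_mem K, ← Submodule.natCast_mul_mem_iff _ (by omega : n - 1 ≠ 0),
    Submodule.restrictScalars_mem, key]
  exact N.mul_mem_of_mem_subalgebra (S.pow_mem (S.neg_mem S.one_mem) n)
    (N.add_mem hpn1 (N.mem_of_mem_subalgebra h1 hw))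

theorem esymm_card_mem (hS : ∀ i, 1 ≤ i → i ≤ n - 2 → psum (Fin n) K i ∈ S)
    (h1 : 1 ∈ N) (hpn1 : psum (Fin n) K (n - 1) ∈ N) (hpn : psum (Fin n) K n ∈ N) (hn : 3 ≤ n) :
    esymm (Fin n) K n ∈ N := by
  set t := ∑ a ∈ antidiagonal n with a.1 ∈ Set.Ioo 0 n,
    (-1) ^ a.1 * esymm (Fin n) K a.1 * psum (Fin n) K a.2
  have key : (n : MvPolynomial (Fin n) K) * esymm (Fin n) K n =
      (-1) ^ (n + 1) * (psum (Fin n) K n + t) := by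
    rw [psum_eq_mul_esymm_sub_sum _ _ _ (by omega), sub_add_cancel, ← mul_assoc, ← mul_assoc,
      ← pow_add, Even.neg_one_pow ⟨n + 1, rfl⟩, one_mul]
  have htN : t ∈ N := by
    refine N.sum_mem fun ⟨a, b⟩ hab => neg_one_pow_mul_esymm_mul_psum_mem ?_
    obtain ⟨hsum, ha0, ha1⟩ : a + b = n ∧ 0 < a ∧ a < n := by simpa using hab
    by_cases hlow : a ≤ n - 2
    · refine Or.inl ⟨esymm_mem_of_forall_psum_mem S hS hlow, ?_⟩
      rcases (by omega : b = n - 1 ∨ b ≤ n - 2) with h | h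
      · rwa [h]
      · exact N.mem_of_mem_subalgebra h1 (hS _ (by omega) h)
    · obtain rfl : a = n - 1 := by omega
      exact Or.inr ⟨esymm_sub_one_mem hS h1 hpn1 (by omega), hS _ (by omega) (by omega)⟩
  rw [← Submodule.restrictScalars_mem K, ← Submodule.natCast_mul_mem_iff _ (by omega : n ≠ 0),
    Submodule.restrictScalars_mem, key]
  exact N.mul_mem_of_mem_subalgebra (S.pow_mem (S.neg_mem S.one_mem) _) (N.add_mem hpn htN)

theorem psum_mem_of_le (hS : ∀ i, 1 ≤ i → i ≤ n - 2 → psum (Fin n) K i ∈ S)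
    (h1 : 1 ∈ N) (hpn1 : psum (Fin n) K (n - 1) ∈ N) (hpn : psum (Fin n) K n ∈ N) (hn : 3 ≤ n)
    {m : ℕ} (hm : m ≤ 2 * n - 3) : psum (Fin n) K m ∈ N := by
  induction m using Nat.strong_induction_on with
  | _ m ih =>
  rcases (by omega : m = 0 ∨ 1 ≤ m ∧ m ≤ n - 2 ∨ m = n - 1 ∨ m = n ∨ n < m) with
    rfl | hlow | rfl | rfl | hhigh
  · rw [psum_zero]
    exact N.mem_of_mem_subalgebra h1 (S.natCast_mem _)
  · exact N.mem_of_mem_subalgebra h1 (hS _ hlow.1 hlow.2)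
  · exact hpn1
  · exact hpn
  rw [psum_eq_neg_sum_of_card_lt (by simpa using hhigh)]
  refine N.neg_mem (N.sum_mem fun ⟨a, b⟩ hab => neg_one_pow_mul_esymm_mul_psum_mem ?_)
  obtain ⟨hsum, ha0, ha1⟩ : a + b = m ∧ 0 < a ∧ a < m := by simpa using hab
  rcases (by omega : a ≤ n - 2 ∨ a = n - 1 ∨ a = n ∨ n < a) with h | rfl | rfl | h
  · exact Or.inl ⟨esymm_mem_of_forall_psum_mem S hS h, ih _ (by omega) (by omega)⟩
  · exact Or.inr ⟨esymm_sub_one_mem hS h1 hpn1 (by omega), hS _ (by omega) (by omega)⟩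
  · exact Or.inr ⟨esymm_card_mem hS h1 hpn1 hpn hn, hS _ (by omega) (by omega)⟩
  · rw [esymm_eq_zero_of_card_lt (by simpa using h)]
    exact Or.inr ⟨N.zero_mem, hS _ (by omega) (by omega)⟩

theorem natCast_mul_psum_sub_sq_mem (hS : ∀ i, 1 ≤ i → i ≤ n - 2 → psum (Fin n) K i ∈ S)
    (h1 : 1 ∈ N) (hpn1 : psum (Fin n) K (n - 1) ∈ N) (hpn : psum (Fin n) K n ∈ N) (hn : 3 ≤ n) :
    ((n - 1 : ℕ) : MvPolynomial (Fin n) K) * psum (Fin n) K (n - 1 + (n - 1)) -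
      psum (Fin n) K (n - 1) ^ 2 ∈ N := by
  obtain ⟨w, hw, hA⟩ := exists_mem_neg_one_pow_mul_esymm_eq hS (by omega)
  set T := {a ∈ antidiagonal (n - 1 + (n - 1)) | a.1 ∈ Set.Ioo 0 (n - 1 + (n - 1))}
  -- the term `(n - 1, n - 1)` of Newton's identity is the only one not linear in `p_{n-1}, p_n`
  have hmem : (n - 1, n - 1) ∈ T := by
    simp only [T, mem_filter, HasAntidiagonal.mem_antidiagonal, Set.mem_Ioo, true_and]
    omega
  have hnewton : psum (Fin n) K (n - 1 + (n - 1)) =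
      -∑ a ∈ T, (-1) ^ a.1 * esymm (Fin n) K a.1 * psum (Fin n) K a.2 :=
    psum_eq_neg_sum_of_card_lt (by simp; omega)
  rw [← add_sum_erase _ _ hmem] at hnewton
  have hsign : ((-1 : MvPolynomial (Fin n) K)) ^ n = (-1) ^ (n - 1) * (-1) := by
    rw [← pow_succ, Nat.sub_add_cancel (by omega)]
  have key : ((n - 1 : ℕ) : MvPolynomial (Fin n) K) * psum (Fin n) K (n - 1 + (n - 1)) -
      psum (Fin n) K (n - 1) ^ 2 = w * psum (Fin n) K (n - 1) -
        ((n - 1 : ℕ) : MvPolynomial (Fin n) K) * ∑ a ∈ T.erase (n - 1, n - 1),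
          (-1) ^ a.1 * esymm (Fin n) K a.1 * psum (Fin n) K a.2 := by
    rw [hnewton]
    linear_combination psum (Fin n) K (n - 1) * hA - ((n - 1 : ℕ) : MvPolynomial (Fin n) K) *
      esymm (Fin n) K (n - 1) * psum (Fin n) K (n - 1) * hsign
  rw [key]
  refine N.sub_mem (N.mul_mem_of_mem_subalgebra hw hpn1) ?_
  refine N.mul_mem_of_mem_subalgebra (S.natCast_mem _)
    (N.sum_mem fun ⟨a, b⟩ hab => neg_one_pow_mul_esymm_mul_psum_mem ?_)
  obtain ⟨hne, hsum, ha0, ha1⟩ : (a, b) ≠ (n - 1, n - 1) ∧ a + b = n - 1 + (n - 1) ∧ 0 < a ∧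
      a < n - 1 + (n - 1) := by simpa [T] using hab
  rcases (by omega : a ≤ n - 2 ∨ a = n - 1 ∨ a = n ∨ n < a) with h | rfl | rfl | h
  · exact Or.inl ⟨esymm_mem_of_forall_psum_mem S hS h,
      psum_mem_of_le hS h1 hpn1 hpn hn (by omega)⟩
  · exact absurd (by rw [show b = n - 1 by omega]) hne
  · exact Or.inr ⟨esymm_card_mem hS h1 hpn1 hpn hn, hS _ (by omega) (by omega)⟩
  · rw [esymm_eq_zero_of_card_lt (by simpa using h)]
    exact Or.inr ⟨N.zero_mem, hS _ (by omega) (by omega)⟩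

end LinearInTopPowerSums

end MvPolynomial

section IntersectionForm

variable {σ R : Type*} [Fintype σ] [CommRing R]

noncomputable def intersectionForm (f g : MvPolynomial σ R) : MvPolynomial σ R :=
  ∑ k, pderiv k f * pderiv k g

theorem intersectionForm_comm (f g : MvPolynomial σ R) :
    intersectionForm f g = intersectionForm g f := by
  simp only [intersectionForm, mul_comm]

theorem intersectionForm_add_left (f f' g : MvPolynomial σ R) :
    intersectionForm (f + f') g = intersectionForm f g + intersectionForm f' g := by
  simp only [intersectionForm, map_add, add_mul, sum_add_distrib]

theorem intersectionForm_mul_left (f f' g : MvPolynomial σ R) :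
    intersectionForm (f * f') g = f * intersectionForm f' g + f' * intersectionForm f g := by
  simp only [intersectionForm, Derivation.leibniz, smul_eq_mul, add_mul, mul_assoc,
    sum_add_distrib, mul_sum]

theorem intersectionForm_C_left (c : R) (g : MvPolynomial σ R) :
    intersectionForm (C c) g = 0 := by
  simp [intersectionForm]

theorem intersectionForm_add_right (f g g' : MvPolynomial σ R) :
    intersectionForm f (g + g') = intersectionForm f g + intersectionForm f g' := by
  simp only [intersectionForm_comm f, intersectionForm_add_left]

theorem intersectionForm_mul_right (f g g' : MvPolynomial σ R) :
    intersectionForm f (g * g') = g * intersectionForm f g' + g' * intersectionForm f g := by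
  simp only [intersectionForm_comm f, intersectionForm_mul_left]

theorem intersectionForm_C_right (f : MvPolynomial σ R) (c : R) :
    intersectionForm f (C c) = 0 := by
  rw [intersectionForm_comm, intersectionForm_C_left]

end IntersectionForm

section Coordinates

variable {r : ℕ} {α : ℂ}

theorem psum_eq_natCast_mul_zPol {i : ℕ} (hi : i ≠ 0) : psum (Fin r) ℂ i = i * zPol r i := by
  rw [zPol, ← mul_assoc, ← map_natCast C, ← C_mul, one_div, mul_inv_cancel₀ (by exact_mod_cast hi),
    C_1, one_mul, psum]

theorem pderiv_zPol {i : ℕ} (hi : i ≠ 0) (k : Fin r) : pderiv k (zPol r i) = X k ^ (i - 1) := by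
  rw [zPol, pderiv_C_mul, map_sum]
  simp only [Derivation.leibniz_pow, pderiv_X, Pi.single_apply, smul_eq_mul, nsmul_eq_mul,
    mul_ite, mul_one, mul_zero, sum_ite_eq', mem_univ, if_true]
  rw [← mul_assoc, ← map_natCast C i, ← C_mul, one_div, inv_mul_cancel₀ (Nat.cast_ne_zero.2 hi),
    C_1, one_mul]

theorem intersectionForm_zPol {i j : ℕ} (hi : i ≠ 0) (hj : j ≠ 0) :
    intersectionForm (zPol r i) (zPol r j) = psum (Fin r) ℂ (i - 1 + (j - 1)) := by
  simp only [intersectionForm, pderiv_zPol hi, pderiv_zPol hj, ← pow_add, psum]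

theorem sPol_of_ne {i : ℕ} (hi : i ≠ r) : sPol r α i = zPol r i := if_neg hi

theorem sPol_self : sPol r α r = C (((r : ℂ) - 1) / (((r : ℂ) - 1) + α * r)) *
    (zPol r r + C α * zPol r 1 * zPol r (r - 1)) := if_pos rfl

variable (r α) in
noncomputable def sVarsRange : Subalgebra ℂ (MvPolynomial (Fin r) ℂ) := (aeval (sVars r α)).range

variable (r α) in
noncomputable def sLinearSpan : Submodule (sVarsRange r α) (MvPolynomial (Fin r) ℂ) :=
  Submodule.span _ {1, sPol r α (r - 1)}

theorem exists_eq_of_mem_sLinearSpan {x : MvPolynomial (Fin r) ℂ} (hx : x ∈ sLinearSpan r α) :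
    ∃ P Q : MvPolynomial (Fin (r - 1)) ℂ,
      x = aeval (sVars r α) P + sPol r α (r - 1) * aeval (sVars r α) Q := by
  obtain ⟨⟨a, P, rfl⟩, ⟨b, Q, rfl⟩, rfl⟩ := Submodule.mem_span_pair.1 hx
  exact ⟨P, Q, by simp [Subalgebra.smul_def, mul_comm]⟩

theorem zPol_mem_sVarsRange {i : ℕ} (hi : 1 ≤ i) (hir : i ≤ r - 2) :
    zPol r i ∈ sVarsRange r α := by
  refine ⟨X ⟨i - 1, by omega⟩, ?_⟩
  simp only [AlgHom.toRingHom_eq_coe, RingHom.coe_coe, aeval_X, sVars]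
  rw [if_pos (by omega), Nat.sub_add_cancel hi, sPol_of_ne (by omega)]

theorem psum_mem_sVarsRange {i : ℕ} (hir : i ≤ r - 2) : psum (Fin r) ℂ i ∈ sVarsRange r α := by
  rcases Nat.eq_zero_or_pos i with rfl | hi
  · rw [psum_zero]
    exact Subalgebra.natCast_mem _ _
  · rw [psum_eq_natCast_mul_zPol hi.ne']
    exact Subalgebra.mul_mem _ (Subalgebra.natCast_mem _ _) (zPol_mem_sVarsRange hi hir)

theorem sPol_self_mem_sVarsRange (hr : 2 ≤ r) : sPol r α r ∈ sVarsRange r α := by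
  refine ⟨X ⟨r - 2, by omega⟩, ?_⟩
  simp [sVars]

theorem C_mem_sVarsRange (c : ℂ) : C c ∈ sVarsRange r α := by
  rw [← algebraMap_eq]
  exact Subalgebra.algebraMap_mem _ c

theorem zPol_self_eq (hr : 2 ≤ r) (hden : ((r : ℂ) - 1) + α * r ≠ 0) :
    zPol r r = C ((((r : ℂ) - 1) + α * r) / ((r : ℂ) - 1)) * sPol r α r -
      C α * zPol r 1 * sPol r α (r - 1) := by
  have hr1 : (r : ℂ) - 1 ≠ 0 := by
    rw [sub_ne_zero]
    exact_mod_cast (by omega : r ≠ 1)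
  have hinv : (((r : ℂ) - 1) + α * r) / ((r : ℂ) - 1) * (((r : ℂ) - 1) / (((r : ℂ) - 1) + α * r))
      = 1 := by
    rw [div_mul_div_comm, mul_comm (_ + _), div_self (mul_ne_zero hr1 hden)]
  rw [sPol_self, sPol_of_ne (by omega), ← mul_assoc, ← C_mul, hinv, C_1]
  ring

theorem sPol_sub_one_mem_sLinearSpan : sPol r α (r - 1) ∈ sLinearSpan r α :=
  Submodule.subset_span (Set.mem_insert_of_mem _ rfl)

theorem one_mem_sLinearSpan : 1 ∈ sLinearSpan r α :=
  Submodule.subset_span (Set.mem_insert _ _)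

theorem psum_sub_one_mem_sLinearSpan (hr : 2 ≤ r) :
    psum (Fin r) ℂ (r - 1) ∈ sLinearSpan r α := by
  rw [psum_eq_natCast_mul_zPol (by omega), ← sPol_of_ne (α := α) (by omega)]
  exact Submodule.mul_mem_of_mem_subalgebra (Subalgebra.natCast_mem _ _)
    sPol_sub_one_mem_sLinearSpan

theorem psum_self_mem_sLinearSpan (hr : 3 ≤ r) (hden : ((r : ℂ) - 1) + α * r ≠ 0) :
    psum (Fin r) ℂ r ∈ sLinearSpan r α := by
  rw [psum_eq_natCast_mul_zPol (by omega), zPol_self_eq (by omega) hden, mul_sub, ← mul_assoc,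
    ← mul_assoc]
  refine Submodule.sub_mem _ (Submodule.mem_of_mem_subalgebra one_mem_sLinearSpan ?_)
    (Submodule.mul_mem_of_mem_subalgebra ?_ sPol_sub_one_mem_sLinearSpan)
  · exact Subalgebra.mul_mem _ (Subalgebra.mul_mem _ (Subalgebra.natCast_mem _ _)
      (C_mem_sVarsRange _)) (sPol_self_mem_sVarsRange (by omega))
  · exact Subalgebra.mul_mem _ (Subalgebra.natCast_mem _ _)
      (Subalgebra.mul_mem _ (C_mem_sVarsRange _) (zPol_mem_sVarsRange le_rfl (by omega)))

theorem psum_mem_sLinearSpan (hr : 3 ≤ r) (hden : ((r : ℂ) - 1) + α * r ≠ 0) {m : ℕ}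
    (hm : m ≤ 2 * r - 3) : psum (Fin r) ℂ m ∈ sLinearSpan r α :=
  psum_mem_of_le (S := sVarsRange r α) (N := sLinearSpan r α)
    (fun _ _ hi => psum_mem_sVarsRange hi) one_mem_sLinearSpan
    (psum_sub_one_mem_sLinearSpan (by omega)) (psum_self_mem_sLinearSpan hr hden) hr hm

theorem intersectionForm_zPol_sPol_self_mem (hr : 3 ≤ r) (hden : ((r : ℂ) - 1) + α * r ≠ 0)
    {i : ℕ} (hi : 1 ≤ i) (hir : i < r) :
    intersectionForm (zPol r i) (sPol r α r) ∈ sLinearSpan r α := by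
  set κ := ((r : ℂ) - 1) / (((r : ℂ) - 1) + α * r)
  have hexpand : intersectionForm (zPol r i) (sPol r α r) =
      C κ * (psum (Fin r) ℂ (i - 1 + (r - 1)) +
        C α * (zPol r 1 * psum (Fin r) ℂ (i - 1 + (r - 1 - 1)))) +
      (C (κ * α) * psum (Fin r) ℂ (i - 1)) * sPol r α (r - 1) := by
    simp only [sPol_self, intersectionForm_mul_right, intersectionForm_add_right,
      intersectionForm_C_right, intersectionForm_zPol (by omega : i ≠ 0) (by omega : r ≠ 0),
      intersectionForm_zPol (by omega : i ≠ 0) (by omega : r - 1 ≠ 0),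
      intersectionForm_zPol (by omega : i ≠ 0) one_ne_zero, Nat.sub_self, add_zero, mul_zero,
      sPol_of_ne (by omega : r - 1 ≠ r), C_mul]
    ring
  have hz : zPol r 1 ∈ sVarsRange r α := zPol_mem_sVarsRange le_rfl (by omega)
  have hP : ∀ {m}, m ≤ 2 * r - 3 → psum (Fin r) ℂ m ∈ sLinearSpan r α :=
    psum_mem_sLinearSpan hr hden
  rw [hexpand]
  refine add_mem (Submodule.mul_mem_of_mem_subalgebra (C_mem_sVarsRange _)
    (add_mem (hP (by omega)) (Submodule.mul_mem_of_mem_subalgebra (C_mem_sVarsRange _)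
      (Submodule.mul_mem_of_mem_subalgebra hz (hP (by omega))))))
    (Submodule.mul_mem_of_mem_subalgebra ?_ sPol_sub_one_mem_sLinearSpan)
  exact Subalgebra.mul_mem _ (C_mem_sVarsRange _) (psum_mem_sVarsRange (by omega))

theorem natCast_mul_intersectionForm_sPol_self_eq (hr : 3 ≤ r)
    (hα : (r : ℂ) * α ^ 2 + 2 * ((r : ℂ) - 1) * α + ((r : ℂ) - 1) = 0) :
    let κ := ((r : ℂ) - 1) / (((r : ℂ) - 1) + α * r)
    ((r - 1 : ℕ) : MvPolynomial (Fin r) ℂ) * intersectionForm (sPol r α r) (sPol r α r) =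
      C (κ ^ 2) *
        ((((r - 1 : ℕ) : MvPolynomial (Fin r) ℂ) * psum (Fin r) ℂ (r - 1 + (r - 1)) -
            psum (Fin r) ℂ (r - 1) ^ 2) +
          ((r - 1 : ℕ) : MvPolynomial (Fin r) ℂ) *
            (C (α ^ 2) * (zPol r 1 ^ 2 * psum (Fin r) ℂ (r - 1 - 1 + (r - 1 - 1))) +
              C (2 * α) * (zPol r 1 * psum (Fin r) ℂ (r - 1 + (r - 1 - 1))))) +
      C (2 * ((r : ℂ) - 1) * κ ^ 2 * α ^ 2) * (zPol r 1 * psum (Fin r) ℂ (r - 1 - 1)) *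
        sPol r α (r - 1) := by
  intro κ
  have hr0 : r ≠ 0 := by omega
  have hr1 : r - 1 ≠ 0 := by omega
  have hαC : (r : MvPolynomial (Fin r) ℂ) * C α ^ 2 + 2 * ((r : MvPolynomial (Fin r) ℂ) - 1) * C α
      + ((r : MvPolynomial (Fin r) ℂ) - 1) = 0 := by
    simpa [map_ofNat] using congrArg (C (σ := Fin r)) hα
  simp only [sPol_self, intersectionForm_mul_right, intersectionForm_mul_left,
    intersectionForm_add_right, intersectionForm_add_left, intersectionForm_C_right,
    intersectionForm_C_left, intersectionForm_zPol, hr0, hr1, one_ne_zero, ne_eq,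
    not_false_eq_true, Nat.sub_self, add_zero, zero_add, mul_zero, psum_zero, Fintype.card_fin,
    sPol_of_ne (by omega : r - 1 ≠ r), map_mul, map_pow, map_sub, map_natCast, map_one,
    map_ofNat]
  rw [Nat.add_comm (r - 1 - 1) (r - 1), psum_eq_natCast_mul_zPol hr1,
    Nat.cast_sub (by omega : 1 ≤ r), Nat.cast_one]
  linear_combination (C κ ^ 2 * ((r : MvPolynomial (Fin r) ℂ) - 1) * zPol r (r - 1) ^ 2) * hαC

theorem intersectionForm_sPol_self_mem (hr : 3 ≤ r) (hden : ((r : ℂ) - 1) + α * r ≠ 0)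
    (hα : (r : ℂ) * α ^ 2 + 2 * ((r : ℂ) - 1) * α + ((r : ℂ) - 1) = 0) :
    intersectionForm (sPol r α r) (sPol r α r) ∈ sLinearSpan r α := by
  rw [← Submodule.restrictScalars_mem ℂ, ← Submodule.natCast_mul_mem_iff _ (by omega : r - 1 ≠ 0),
    Submodule.restrictScalars_mem, natCast_mul_intersectionForm_sPol_self_eq hr hα]
  have hz : zPol r 1 ∈ sVarsRange r α := zPol_mem_sVarsRange le_rfl (by omega)
  have hP : ∀ {m}, m ≤ 2 * r - 3 → psum (Fin r) ℂ m ∈ sLinearSpan r α :=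
    psum_mem_sLinearSpan hr hden
  have hsq := natCast_mul_psum_sub_sq_mem (fun _ _ hi => psum_mem_sVarsRange hi)
    one_mem_sLinearSpan (psum_sub_one_mem_sLinearSpan (α := α) (by omega))
    (psum_self_mem_sLinearSpan hr hden) hr
  have hlin : C (α ^ 2) * (zPol r 1 ^ 2 * psum (Fin r) ℂ (r - 1 - 1 + (r - 1 - 1))) +
      C (2 * α) * (zPol r 1 * psum (Fin r) ℂ (r - 1 + (r - 1 - 1))) ∈ sLinearSpan r α :=
    add_mem
      (Submodule.mul_mem_of_mem_subalgebra (C_mem_sVarsRange _)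
        (Submodule.mul_mem_of_mem_subalgebra (Subalgebra.pow_mem _ hz 2) (hP (by omega))))
      (Submodule.mul_mem_of_mem_subalgebra (C_mem_sVarsRange _)
        (Submodule.mul_mem_of_mem_subalgebra hz (hP (by omega))))
  refine add_mem (Submodule.mul_mem_of_mem_subalgebra (C_mem_sVarsRange _)
    (add_mem hsq (Submodule.mul_mem_of_mem_subalgebra (Subalgebra.natCast_mem _ _) hlin)))
    (Submodule.mul_mem_of_mem_subalgebra ?_ sPol_sub_one_mem_sLinearSpan)
  exact Subalgebra.mul_mem _ (C_mem_sVarsRange _)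
    (Subalgebra.mul_mem _ hz (psum_mem_sVarsRange (by omega)))

theorem intersectionForm_sPol_mem (hr : 3 ≤ r) (hden : ((r : ℂ) - 1) + α * r ≠ 0)
    (hα : (r : ℂ) * α ^ 2 + 2 * ((r : ℂ) - 1) * α + ((r : ℂ) - 1) = 0) {i j : ℕ} (hi : 1 ≤ i)
    (hir : i ≤ r) (hj : 1 ≤ j) (hjr : j ≤ r) :
    intersectionForm (sPol r α i) (sPol r α j) ∈ sLinearSpan r α := by
  rcases hir.lt_or_eq with hir | rfl <;> rcases hjr.lt_or_eq with hjr | rfl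
  · rw [sPol_of_ne hir.ne, sPol_of_ne hjr.ne, intersectionForm_zPol (by omega) (by omega)]
    exact psum_mem_sLinearSpan hr hden (by omega)
  · rw [sPol_of_ne hir.ne]
    exact intersectionForm_zPol_sPol_self_mem hr hden hi hir
  · rw [intersectionForm_comm, sPol_of_ne hjr.ne]
    exact intersectionForm_zPol_sPol_self_mem hr hden hj hjr
  · exact intersectionForm_sPol_self_mem hr hden hα

end Coordinates

theorem Complex.im_ne_zero_of_natCast_mul_sq_add_eq_zero {r : ℕ} (hr : 2 ≤ r) {α : ℂ}
    (hα : (r : ℂ) * α ^ 2 + 2 * ((r : ℂ) - 1) * α + ((r : ℂ) - 1) = 0) : α.im ≠ 0 := by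
  intro him
  have hre : (r : ℝ) * α.re ^ 2 + 2 * ((r : ℝ) - 1) * α.re + ((r : ℝ) - 1) = 0 := by
    rw [show α = (α.re : ℂ) from Complex.ext rfl (by simp [him])] at hα
    exact_mod_cast hα
  have hr' : (2 : ℝ) ≤ r := by exact_mod_cast hr
  -- `r` times the left side is `(r α + (r - 1))² + (r - 1) > 0`
  nlinarith [sq_nonneg ((r : ℝ) * α.re + ((r : ℝ) - 1))]

theorem Complex.sub_one_add_mul_natCast_ne_zero {r : ℕ} (hr : r ≠ 0) {α : ℂ} (him : α.im ≠ 0) :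
    ((r : ℂ) - 1) + α * r ≠ 0 := by
  intro h
  have := congrArg Complex.im h
  simp [him, hr] at this

/-- if `rα² + 2(r−1)α + (r−1) = 0` then `α` is non-real,
`(r−1) + αr ≠ 0`, and in the coordinates `s` the intersection form
`Σ_k ∂s_i/∂p_k · ∂s_j/∂p_k` is at most linear in `s_{r−1}`. -/
theorem intersection_form_linear_in_s_rm1 (r : ℕ) (hr : 3 ≤ r) (α : ℂ)
    (hα : (r : ℂ) * α ^ 2 + 2 * ((r : ℂ) - 1) * α + ((r : ℂ) - 1) = 0) :
    α.im ≠ 0 ∧ ((r : ℂ) - 1) + α * r ≠ 0 ∧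
    ∀ i j : ℕ, 1 ≤ i → i ≤ r → 1 ≤ j → j ≤ r →
      ∃ P Q : MvPolynomial (Fin (r - 1)) ℂ,
        (∑ k : Fin r,
            (MvPolynomial.pderiv k (sPol r α i)) * (MvPolynomial.pderiv k (sPol r α j))) =
          MvPolynomial.aeval (sVars r α) P +
            sPol r α (r - 1) * MvPolynomial.aeval (sVars r α) Q := by
  have him := Complex.im_ne_zero_of_natCast_mul_sq_add_eq_zero (by omega) hα
  have hden := Complex.sub_one_add_mul_natCast_ne_zero (r := r) (by omega) him
  exact ⟨him, hden, fun i j hi hir hj hjr =>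
    exists_eq_of_mem_sLinearSpan (intersectionForm_sPol_mem hr hden hα hi hir hj hjr)⟩
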